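/- Let μ₁,...,μₙ ∈ 𝒫₂(ℝ) with quantile functions Q₁,...,Qₙ, and λ₁,...,λₙ ≥ 0 with Σλᵢ = 1. Let μ̄ be the probability measure whose quantile function is Σᵢ λᵢQᵢ. Then μ̄ minimizes ν ↦ Σᵢ λᵢ W₂²(μᵢ, ν) over ν ∈ 𝒫₂(ℝ), i.e., μ̄ is the Wasserstein barycenter of (μᵢ) with weights (λᵢ). -/

import Mathlib

/-! The quantile coupling `ξ ↦ (Q_μ ξ, Q_ν ξ)` of Lebesgue measure on `(0, 1)` is optimal for the
quadratic cost, so `W₂²(μ, ν) = ∫₀¹ (Q_μ - Q_ν)²`. For optimality, write `(x - y)²` as the area of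
the square `[min x y, max x y)²`; by Tonelli the cost of a coupling `π` becomes
`∫∫ π{x > max s t, y ≤ min s t} + π{x ≤ min s t, y > max s t} ds dt`, and every coupling gives
the quadrant `{x > b, y ≤ a}` mass at least `F_ν a - F_μ b`, which the quantile coupling attains.
With the cost written as an integral over `(0, 1)`, the barycenter property is the pointwise fact
that a weighted mean minimises `g ↦ ∑ λᵢ (aᵢ - g)²`. -/

open MeasureTheory Finset
open scoped ENNReal

/-- The quantile function of a probability measure on ℝ. -/
noncomputable def quantile (μ : Measure ℝ) (ξ : ℝ) : ℝ :=
  sInf {x : ℝ | ENNReal.ofReal ξ ≤ μ (Set.Iic x)}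

/-- Squared 2-Wasserstein distance on measures on ℝ, as an infimum over couplings. -/
noncomputable def W2sq (μ ν : Measure ℝ) : ℝ≥0∞ :=
  ⨅ π : {π : Measure (ℝ × ℝ) // π.map Prod.fst = μ ∧ π.map Prod.snd = ν},
    ∫⁻ p, ENNReal.ofReal ((p.1 - p.2) ^ 2) ∂(π : Measure (ℝ × ℝ))

open Set Filter Topology ProbabilityTheory

lemma StieltjesFunction.sInf_le_iff (f : StieltjesFunction ℝ) {ξ x : ℝ}
    (hne : {y | ξ ≤ f y}.Nonempty) (hbdd : BddBelow {y | ξ ≤ f y}) :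
    sInf {y | ξ ≤ f y} ≤ x ↔ ξ ≤ f x := by
  refine ⟨fun h => ?_, fun h => csInf_le hbdd h⟩
  have hmem : ξ ≤ f (sInf {y | ξ ≤ f y}) := by
    refine ge_of_tendsto ((f.right_continuous _).mono Ioi_subset_Ici_self) ?_
    filter_upwards [self_mem_nhdsWithin] with y hy
    obtain ⟨z, hz, hzy⟩ := exists_lt_of_csInf_lt hne hy
    exact hz.trans (f.mono hzy.le)
  exact hmem.trans (f.mono h)

section Quantile

variable {μ : Measure ℝ} [IsProbabilityMeasure μ] {ξ x : ℝ}

lemma quantile_eq_sInf_cdf : quantile μ ξ = sInf {x | ξ ≤ cdf μ x} := by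
  simp_rw [quantile, ← ofReal_cdf, ENNReal.ofReal_le_ofReal_iff (cdf_nonneg μ _)]

lemma quantile_le_iff (h0 : 0 < ξ) (h1 : ξ < 1) : quantile μ ξ ≤ x ↔ ξ ≤ cdf μ x := by
  rw [quantile_eq_sInf_cdf]
  refine (cdf μ).sInf_le_iff ?_ ?_
  · exact ((tendsto_cdf_atTop μ).eventually (lt_mem_nhds h1)).exists.imp fun _ => le_of_lt
  · obtain ⟨x₀, hx₀⟩ := eventually_atBot.1 ((tendsto_cdf_atBot μ).eventually (gt_mem_nhds h0))
    exact ⟨x₀, fun y hy => le_of_not_ge fun hyx => (hx₀ y hyx).not_ge hy⟩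

lemma lt_quantile_iff (h0 : 0 < ξ) (h1 : ξ < 1) : x < quantile μ ξ ↔ cdf μ x < ξ := by
  rw [← not_le, ← not_le, quantile_le_iff h0 h1]

lemma monotoneOn_quantile : MonotoneOn (quantile μ) (Ioo 0 1) := fun _ ha _ hb hab =>
  (quantile_le_iff ha.1 ha.2).2 <| hab.trans <| (quantile_le_iff hb.1 hb.2).1 le_rfl

lemma aemeasurable_quantile : AEMeasurable (quantile μ) (volume.restrict (Ioo 0 1)) :=
  aemeasurable_restrict_of_monotoneOn measurableSet_Ioo monotoneOn_quantile

end Quantile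

instance : IsProbabilityMeasure (volume.restrict (Ioo (0 : ℝ) 1)) :=
  ⟨by simp [Real.volume_Ioo]⟩

lemma volume_Ioo_inter_Ioc {a b : ℝ} (ha : 0 ≤ a) (hb : b ≤ 1) :
    volume (Ioo (0 : ℝ) 1 ∩ Ioc a b) = ENNReal.ofReal (b - a) := by
  rw [measure_congr ((Ioo_ae_eq_Ioc (μ := volume)).inter (ae_eq_refl (Ioc a b))),
    Set.Ioc_inter_Ioc, max_eq_right ha, min_eq_right hb, Real.volume_Ioc]

lemma map_quantile (μ : Measure ℝ) [IsProbabilityMeasure μ] :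
    (volume.restrict (Ioo 0 1)).map (quantile μ) = μ := by
  have := Measure.isProbabilityMeasure_map (aemeasurable_quantile (μ := μ))
  refine Measure.ext_of_Iic _ _ fun x => ?_
  have hset : quantile μ ⁻¹' Iic x ∩ Ioo 0 1 = Ioo (0 : ℝ) 1 ∩ Set.Ioc 0 (cdf μ x) := by
    ext ξ
    constructor
    · rintro ⟨hq, h0, h1⟩
      exact ⟨⟨h0, h1⟩, h0, (quantile_le_iff h0 h1).1 hq⟩
    · rintro ⟨⟨h0, h1⟩, -, hle⟩
      exact ⟨(quantile_le_iff h0 h1).2 hle, h0, h1⟩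
  rw [Measure.map_apply_of_aemeasurable aemeasurable_quantile measurableSet_Iic,
    Measure.restrict_apply' measurableSet_Ioo, hset, volume_Ioo_inter_Ioc le_rfl (cdf_le_one μ x),
    sub_zero, ofReal_cdf]

noncomputable def quantileCoupling (μ ν : Measure ℝ) : Measure (ℝ × ℝ) :=
  (volume.restrict (Ioo 0 1)).map fun ξ => (quantile μ ξ, quantile ν ξ)

section Coupling

variable {μ ν : Measure ℝ} [IsProbabilityMeasure μ] [IsProbabilityMeasure ν]

lemma aemeasurable_quantile_prod :
    AEMeasurable (fun ξ => (quantile μ ξ, quantile ν ξ)) (volume.restrict (Ioo 0 1)) :=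
  aemeasurable_quantile.prodMk aemeasurable_quantile

instance : IsProbabilityMeasure (quantileCoupling μ ν) :=
  Measure.isProbabilityMeasure_map aemeasurable_quantile_prod

lemma quantileCoupling_map_fst : (quantileCoupling μ ν).map Prod.fst = μ := by
  rw [quantileCoupling, AEMeasurable.map_map_of_aemeasurable measurable_fst.aemeasurable
    aemeasurable_quantile_prod]
  exact map_quantile μ

lemma quantileCoupling_map_snd : (quantileCoupling μ ν).map Prod.snd = ν := by
  rw [quantileCoupling, AEMeasurable.map_map_of_aemeasurable measurable_snd.aemeasurable
    aemeasurable_quantile_prod]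
  exact map_quantile ν

lemma quantileCoupling_map_swap : (quantileCoupling μ ν).map Prod.swap = quantileCoupling ν μ := by
  rw [quantileCoupling, AEMeasurable.map_map_of_aemeasurable measurable_swap.aemeasurable
    aemeasurable_quantile_prod]
  rfl

lemma quantileCoupling_Ioi_prod_Iic (a b : ℝ) :
    quantileCoupling μ ν (Ioi b ×ˢ Iic a) = ENNReal.ofReal (cdf ν a - cdf μ b) := by
  have hset : (fun ξ => (quantile μ ξ, quantile ν ξ)) ⁻¹' (Ioi b ×ˢ Iic a) ∩ Ioo 0 1
      = Ioo (0 : ℝ) 1 ∩ Set.Ioc (cdf μ b) (cdf ν a) := by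
    ext ξ
    constructor
    · rintro ⟨⟨hb, ha⟩, h0, h1⟩
      exact ⟨⟨h0, h1⟩, (lt_quantile_iff h0 h1).1 hb, (quantile_le_iff h0 h1).1 ha⟩
    · rintro ⟨⟨h0, h1⟩, hb, ha⟩
      exact ⟨⟨(lt_quantile_iff h0 h1).2 hb, (quantile_le_iff h0 h1).2 ha⟩, h0, h1⟩
  rw [quantileCoupling, Measure.map_apply_of_aemeasurable aemeasurable_quantile_prod
    (measurableSet_Ioi.prod measurableSet_Iic), Measure.restrict_apply' measurableSet_Ioo, hset,
    volume_Ioo_inter_Ioc (cdf_nonneg μ b) (cdf_le_one ν a)]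

lemma ofReal_cdf_sub_cdf_le_measure_Ioi_prod_Iic {π : Measure (ℝ × ℝ)} (hπ₁ : π.map Prod.fst = μ)
    (hπ₂ : π.map Prod.snd = ν) (a b : ℝ) :
    ENNReal.ofReal (cdf ν a - cdf μ b) ≤ π (Ioi b ×ˢ Iic a) := by
  have hν : ν (Iic a) ≤ μ (Iic b) + π (Ioi b ×ˢ Iic a) := by
    rw [← hπ₁, ← hπ₂, Measure.map_apply measurable_fst measurableSet_Iic,
      Measure.map_apply measurable_snd measurableSet_Iic]
    refine (measure_mono fun p hp => ?_).trans (measure_union_le _ _)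
    rcases le_or_gt p.1 b with h | h
    · exact Or.inl h
    · exact Or.inr ⟨h, hp⟩
  rw [ENNReal.ofReal_sub _ (cdf_nonneg μ b), ofReal_cdf, ofReal_cdf]
  exact tsub_le_iff_left.2 hν

lemma quantileCoupling_Ioi_prod_Iic_le {π : Measure (ℝ × ℝ)} (hπ₁ : π.map Prod.fst = μ)
    (hπ₂ : π.map Prod.snd = ν) (a b : ℝ) :
    quantileCoupling μ ν (Ioi b ×ˢ Iic a) ≤ π (Ioi b ×ˢ Iic a) :=
  (quantileCoupling_Ioi_prod_Iic a b).trans_le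
    (ofReal_cdf_sub_cdf_le_measure_Ioi_prod_Iic hπ₁ hπ₂ a b)

lemma quantileCoupling_Iic_prod_Ioi_le {π : Measure (ℝ × ℝ)} (hπ₁ : π.map Prod.fst = μ)
    (hπ₂ : π.map Prod.snd = ν) (a b : ℝ) :
    quantileCoupling μ ν (Iic a ×ˢ Ioi b) ≤ π (Iic a ×ˢ Ioi b) := by
  have hswap₁ : (π.map Prod.swap).map Prod.fst = ν := by
    rw [Measure.map_map measurable_fst measurable_swap]; exact hπ₂
  have hswap₂ : (π.map Prod.swap).map Prod.snd = μ := by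
    rw [Measure.map_map measurable_snd measurable_swap]; exact hπ₁
  have h := quantileCoupling_Ioi_prod_Iic_le hswap₁ hswap₂ a b
  rwa [← quantileCoupling_map_swap, Measure.map_apply measurable_swap
    (measurableSet_Ioi.prod measurableSet_Iic), Measure.map_apply measurable_swap
    (measurableSet_Ioi.prod measurableSet_Iic), preimage_swap_prod] at h

end Coupling

lemma ofReal_sq_sub_eq_volume (x y : ℝ) :
    ENNReal.ofReal ((x - y) ^ 2)
      = volume (Ico (min x y) (max x y) ×ˢ Ico (min x y) (max x y)) := by
  rw [Measure.volume_eq_prod, Measure.prod_prod, Real.volume_Ico, max_sub_min_eq_abs',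
    ← ENNReal.ofReal_mul (abs_nonneg _), abs_mul_abs_self, sq]

lemma mem_Ico_min_max_prod_iff {x y s t : ℝ} :
    (s, t) ∈ Ico (min x y) (max x y) ×ˢ Ico (min x y) (max x y) ↔
      (x, y) ∈ Ioi (max s t) ×ˢ Iic (min s t) ∪ Iic (min s t) ×ˢ Ioi (max s t) := by
  simp only [Set.mem_prod, Set.mem_Ico, Set.mem_union, Set.mem_Ioi, Set.mem_Iic, min_le_iff,
    le_min_iff, lt_max_iff, max_lt_iff]
  grind

lemma lintegral_ofReal_sq_sub_eq (π : Measure (ℝ × ℝ)) [SFinite π] :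
    ∫⁻ p, ENNReal.ofReal ((p.1 - p.2) ^ 2) ∂π
      = ∫⁻ q : ℝ × ℝ, π (Ioi (max q.1 q.2) ×ˢ Iic (min q.1 q.2)
          ∪ Iic (min q.1 q.2) ×ˢ Ioi (max q.1 q.2)) := by
  set E : Set ((ℝ × ℝ) × (ℝ × ℝ)) := {r |
    r.2 ∈ Ico (min r.1.1 r.1.2) (max r.1.1 r.1.2) ×ˢ Ico (min r.1.1 r.1.2) (max r.1.1 r.1.2)}
  have hE : MeasurableSet E := by
    have hmin : Measurable fun r : (ℝ × ℝ) × (ℝ × ℝ) => min r.1.1 r.1.2 := by fun_prop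
    have hmax : Measurable fun r : (ℝ × ℝ) × (ℝ × ℝ) => max r.1.1 r.1.2 := by fun_prop
    exact ((measurableSet_le hmin (by fun_prop)).inter (measurableSet_lt (by fun_prop) hmax)).inter
      ((measurableSet_le hmin (by fun_prop)).inter (measurableSet_lt (by fun_prop) hmax))
  calc ∫⁻ p, ENNReal.ofReal ((p.1 - p.2) ^ 2) ∂π
      = ∫⁻ p, volume (Prod.mk p ⁻¹' E) ∂π := by
        simp only [ofReal_sq_sub_eq_volume]; rfl
    _ = (π.prod volume) E := (Measure.prod_apply hE).symm
    _ = ∫⁻ q, π ((fun p => (p, q)) ⁻¹' E) := Measure.prod_apply_symm hE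
    _ = _ := by
        congr 1 with q
        congr 1 with p
        exact mem_Ico_min_max_prod_iff

section Optimality

variable {μ ν : Measure ℝ} [IsProbabilityMeasure μ] [IsProbabilityMeasure ν]

lemma lintegral_sq_sub_quantileCoupling_le {π : Measure (ℝ × ℝ)} [SFinite π]
    (hπ₁ : π.map Prod.fst = μ) (hπ₂ : π.map Prod.snd = ν) :
    ∫⁻ p, ENNReal.ofReal ((p.1 - p.2) ^ 2) ∂(quantileCoupling μ ν)
      ≤ ∫⁻ p, ENNReal.ofReal ((p.1 - p.2) ^ 2) ∂π := by
  rw [lintegral_ofReal_sq_sub_eq, lintegral_ofReal_sq_sub_eq]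
  refine lintegral_mono fun q => ?_
  have hdisj : Disjoint (Ioi (max q.1 q.2) ×ˢ Iic (min q.1 q.2))
      (Iic (min q.1 q.2) ×ˢ Ioi (max q.1 q.2)) :=
    Set.disjoint_prod.2 (Or.inl (Iic_disjoint_Ioi min_le_max).symm)
  have hmeas : MeasurableSet (Iic (min q.1 q.2) ×ˢ Ioi (max q.1 q.2)) :=
    measurableSet_Iic.prod measurableSet_Ioi
  rw [measure_union hdisj hmeas, measure_union hdisj hmeas]
  exact add_le_add (quantileCoupling_Ioi_prod_Iic_le hπ₁ hπ₂ _ _)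
    (quantileCoupling_Iic_prod_Ioi_le hπ₁ hπ₂ _ _)

theorem W2sq_eq_lintegral_quantile (μ ν : Measure ℝ) [IsProbabilityMeasure μ]
    [IsProbabilityMeasure ν] :
    W2sq μ ν = ∫⁻ ξ in Ioo 0 1, ENNReal.ofReal ((quantile μ ξ - quantile ν ξ) ^ 2) := by
  have hcost : ∫⁻ p, ENNReal.ofReal ((p.1 - p.2) ^ 2) ∂(quantileCoupling μ ν)
      = ∫⁻ ξ in Ioo 0 1, ENNReal.ofReal ((quantile μ ξ - quantile ν ξ) ^ 2) :=
    lintegral_map' (by fun_prop) aemeasurable_quantile_prod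
  refine le_antisymm ?_ (le_iInf fun ⟨π, hπ₁, hπ₂⟩ => ?_)
  · exact (iInf_le _ ⟨quantileCoupling μ ν, quantileCoupling_map_fst, quantileCoupling_map_snd⟩
      ).trans_eq hcost
  · have : IsProbabilityMeasure π := by
      have : IsProbabilityMeasure (π.map Prod.fst) := hπ₁ ▸ inferInstance
      exact Measure.isProbabilityMeasure_of_map Prod.fst
    exact hcost.symm.trans_le (lintegral_sq_sub_quantileCoupling_le hπ₁ hπ₂)

end Optimality

lemma sum_mul_sq_sub_eq {ι : Type*} [Fintype ι] (w a : ι → ℝ) (hw : ∑ i, w i = 1) (g : ℝ) :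
    ∑ i, w i * (a i - g) ^ 2
      = ∑ i, w i * (a i - ∑ j, w j * a j) ^ 2 + (∑ j, w j * a j - g) ^ 2 := by
  set m := ∑ j, w j * a j
  have h : ∀ i, w i * (a i - g) ^ 2
      = w i * (a i - m) ^ 2 + (2 * (m - g) * (w i * a i) - (m - g) * (m + g) * w i) := by
    intro i; ring
  rw [Finset.sum_congr rfl fun i _ => h i, Finset.sum_add_distrib, Finset.sum_sub_distrib,
    ← Finset.mul_sum, ← Finset.mul_sum, hw]
  ring

lemma sum_ofReal_mul_sq_sub_weightedMean_le {ι : Type*} [Fintype ι] (w a : ι → ℝ)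
    (hw₀ : ∀ i, 0 ≤ w i) (hw₁ : ∑ i, w i = 1) (g : ℝ) :
    ∑ i, ENNReal.ofReal (w i) * ENNReal.ofReal ((a i - ∑ j, w j * a j) ^ 2)
      ≤ ∑ i, ENNReal.ofReal (w i) * ENNReal.ofReal ((a i - g) ^ 2) := by
  simp_rw [← ENNReal.ofReal_mul (hw₀ _)]
  rw [← ENNReal.ofReal_sum_of_nonneg fun i _ => mul_nonneg (hw₀ i) (sq_nonneg _),
    ← ENNReal.ofReal_sum_of_nonneg fun i _ => mul_nonneg (hw₀ i) (sq_nonneg _),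
    sum_mul_sq_sub_eq w a hw₁ g]
  exact ENNReal.ofReal_le_ofReal (le_add_of_nonneg_right (sq_nonneg _))

lemma sum_mul_W2sq_eq_lintegral {ι : Type*} [Fintype ι] (μs : ι → Measure ℝ)
    [∀ i, IsProbabilityMeasure (μs i)] (w : ι → ℝ≥0∞) (ν : Measure ℝ) [IsProbabilityMeasure ν] :
    ∑ i, w i * W2sq (μs i) ν
      = ∫⁻ ξ in Ioo 0 1, ∑ i, w i * ENNReal.ofReal ((quantile (μs i) ξ - quantile ν ξ) ^ 2) := by
  have hmeas : ∀ i, AEMeasurable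
      (fun ξ => ENNReal.ofReal ((quantile (μs i) ξ - quantile ν ξ) ^ 2))
      (volume.restrict (Ioo 0 1)) := fun i =>
    ((aemeasurable_quantile.sub aemeasurable_quantile).pow_const 2).ennreal_ofReal
  rw [lintegral_finsetSum' _ fun i _ => (hmeas i).const_mul _]
  exact Finset.sum_congr rfl fun i _ => by
    rw [W2sq_eq_lintegral_quantile, lintegral_const_mul'' _ (hmeas i)]

theorem stmt19_general (n : ℕ) (μs : Fin n → Measure ℝ) [∀ i, IsProbabilityMeasure (μs i)]
    (lam : Fin n → ℝ) (hpos : ∀ i, 0 ≤ lam i) (hsum : ∑ i, lam i = 1)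
    (μbar : Measure ℝ) [IsProbabilityMeasure μbar]
    (hq : ∀ᵐ ξ ∂(volume.restrict (Set.Ioo (0:ℝ) 1)),
      quantile μbar ξ = ∑ i, lam i * quantile (μs i) ξ) :
    ∀ ν : Measure ℝ, IsProbabilityMeasure ν → MemLp (id : ℝ → ℝ) 2 ν →
      ∑ i, ENNReal.ofReal (lam i) * W2sq (μs i) μbar
        ≤ ∑ i, ENNReal.ofReal (lam i) * W2sq (μs i) ν := by
  intro ν _ _
  rw [sum_mul_W2sq_eq_lintegral, sum_mul_W2sq_eq_lintegral]
  refine lintegral_mono_ae ?_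
  filter_upwards [hq] with ξ hξ
  rw [hξ]
  exact sum_ofReal_mul_sq_sub_weightedMean_le lam (fun i => quantile (μs i) ξ) hpos hsum _

/-- The measure whose quantile function is the convex combination `∑ λᵢ Q_{μᵢ}` is the
Wasserstein barycenter of `μ₁,…,μₙ` with weights `λ₁,…,λₙ`: it minimizes
`ν ↦ ∑ᵢ λᵢ W₂²(μᵢ, ν)` over `𝒫₂(ℝ)`. -/
theorem stmt19 (n : ℕ) (μs : Fin n → Measure ℝ) [∀ i, IsProbabilityMeasure (μs i)]
    (hμs : ∀ i, MemLp (id : ℝ → ℝ) 2 (μs i))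
    (lam : Fin n → ℝ) (hpos : ∀ i, 0 ≤ lam i) (hsum : ∑ i, lam i = 1)
    (μbar : Measure ℝ) [IsProbabilityMeasure μbar] (hμbar : MemLp (id : ℝ → ℝ) 2 μbar)
    (hq : ∀ᵐ ξ ∂(volume.restrict (Set.Ioo (0:ℝ) 1)),
      quantile μbar ξ = ∑ i, lam i * quantile (μs i) ξ) :
    ∀ ν : Measure ℝ, IsProbabilityMeasure ν → MemLp (id : ℝ → ℝ) 2 ν →
      ∑ i, ENNReal.ofReal (lam i) * W2sq (μs i) μbar
        ≤ ∑ i, ENNReal.ofReal (lam i) * W2sq (μs i) ν :=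
  stmt19_general n μs lam hpos hsum μbar hq
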